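/- arXiv:2111.10558 — 4 statements merged into one kernel-verified Lean document; each statement's English description precedes it below -/
import Mathlib

section
/- Let G be a Lie group, H a compact subgroup with Lie algebra h, and g = h + m a linear decomposition. Let g : (a,b) → G be a smooth curve with a < 0 < b. Then the ODE on H given by h'(t) + (L_{h(t)})_* ( (Ad(h(t)^{-1}) ((L_{g(t)^{-1}})_* g'(t)))_h ) = 0 with h(0) = e has a solution defined on all of (a,b), where (·)_h denotes the h-component with respect to the decomposition g = h + m. -/
open Set Metric Filter
open scoped NNReal Topology

structure OldIsPicardLindelof {E : Type*} [NormedAddCommGroup E] (v : ℝ → E → E)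
    (tMin t₀ tMax : ℝ) (x₀ : E) (L : ℝ≥0) (R C : ℝ) : Prop where
  ht₀ : t₀ ∈ Icc tMin tMax
  hR : 0 ≤ R
  lipschitz : ∀ t ∈ Icc tMin tMax, LipschitzOnWith L (v t) (closedBall x₀ R)
  cont : ∀ x ∈ closedBall x₀ R, ContinuousOn (fun t : ℝ => v t x) (Icc tMin tMax)
  norm_le : ∀ t ∈ Icc tMin tMax, ∀ x ∈ closedBall x₀ R, ‖v t x‖ ≤ C
  C_mul_le_R : C * max (tMax - t₀) (t₀ - tMin) ≤ R

theorem aux_pl_mem {E : Type*} [NormedAddCommGroup E] [NormedSpace ℝ E] [CompleteSpace E]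
    {v : ℝ → E → E} {tMin t₀ tMax : ℝ} (x₀ : E) {C R : ℝ} {L : ℝ≥0}
    (hpl : OldIsPicardLindelof v tMin t₀ tMax x₀ L R C) :
    ∃ f : ℝ → E, f t₀ = x₀ ∧ ∀ t ∈ Icc tMin tMax,
      f t ∈ Metric.closedBall x₀ R ∧ HasDerivWithinAt f (v t (f t)) (Icc tMin tMax) t := by
  have hC : 0 ≤ C :=
    (norm_nonneg _).trans (hpl.norm_le t₀ hpl.ht₀ x₀ (mem_closedBall_self hpl.hR))
  have hf : IsPicardLindelof v (⟨t₀, hpl.ht₀⟩ : Icc tMin tMax) x₀ (Real.toNNReal R) 0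
      (Real.toNNReal C) L :=
    { lipschitzOnWith := by rw [Real.coe_toNNReal _ hpl.hR]; exact hpl.lipschitz
      continuousOn := by rw [Real.coe_toNNReal _ hpl.hR]; exact hpl.cont
      norm_le := by
        rw [Real.coe_toNNReal _ hpl.hR, Real.coe_toNNReal _ hC]; exact hpl.norm_le
      mul_max_le := by
        simp only [Real.coe_toNNReal _ hpl.hR, Real.coe_toNNReal _ hC, NNReal.coe_zero, sub_zero]
        exact hpl.C_mul_le_R }
  obtain ⟨α, hα⟩ := ODE.FunSpace.exists_isFixedPt_next hf (mem_closedBall_self le_rfl)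
  refine ⟨α.compProj, ?_, fun t ht => ⟨?_, ?_⟩⟩
  · show α.compProj ((⟨t₀, hpl.ht₀⟩ : Icc tMin tMax) : ℝ) = x₀
    rw [ODE.FunSpace.compProj_val, ← hα, ODE.FunSpace.next_apply₀]
  · have := α.compProj_mem_closedBall (t := t) hf.mul_max_le
    rwa [Real.coe_toNNReal _ hpl.hR] at this
  · apply ODE.hasDerivWithinAt_picard_Icc hpl.ht₀ hf.continuousOn_uncurry
      α.continuous_compProj.continuousOn (fun _ ht' ↦ α.compProj_mem_closedBall hf.mul_max_le)
      x₀ ht |>.congr_of_mem _ ht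
    intro t' ht'
    nth_rw 1 [← hα]
    rw [ODE.FunSpace.compProj_of_mem ht', ODE.FunSpace.next_apply]

theorem aux_invariance {E : Type*} [NormedAddCommGroup E] [NormedSpace ℝ E]
    {K U : Set E} (hK : IsCompact K) (hKne : K.Nonempty) (hKU : K ⊆ U)
    {F : ℝ → E → E} {L : ℝ≥0} {t₀ T : ℝ}
    (hlip : ∀ t ∈ Ico t₀ T, LipschitzOnWith L (F t) U)
    (htan : ∀ t ∈ Ico t₀ T, ∀ y ∈ K, ∃ Γ : ℝ → E,
      (∀ s, Γ s ∈ K) ∧ Γ 0 = y ∧ HasDerivAt Γ (F t y) 0)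
    {e : ℝ → E} (he : ∀ t ∈ Icc t₀ T, HasDerivWithinAt e (F t (e t)) (Icc t₀ T) t)
    (heU : ∀ t ∈ Icc t₀ T, e t ∈ U) (he₀ : e t₀ ∈ K) :
    ∀ t ∈ Icc t₀ T, e t ∈ K := by
  set φ : ℝ → ℝ := fun t => infDist (e t) K with hφ
  have hecont : ContinuousOn e (Icc t₀ T) := fun t ht => (he t ht).continuousWithinAt
  have hφcont : ContinuousOn φ (Icc t₀ T) :=
    (continuous_infDist_pt K).comp_continuousOn hecont
  have key : ∀ x ∈ Icc t₀ T, φ x ≤ gronwallBound 0 (↑L) 0 (x - t₀) := by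
    refine le_gronwallBound_of_liminf_deriv_right_le (f' := fun t => ↑L * φ t) hφcont ?_ ?_ ?_
    · intro x hx r hr
      obtain ⟨y, hyK, hyd⟩ := hK.exists_infDist_eq_dist hKne (e x)
      obtain ⟨Γ, hΓK, hΓ0, hΓd⟩ := htan x hx y hyK
      have hr' : ↑L * φ x < r := hr
      set ε' := (r - ↑L * φ x) / 3 with hε'
      have hε'pos : 0 < ε' := by
        rw [hε']; linarith
      have hφx : φ x = dist (e x) y := hyd
      have h1 : HasDerivWithinAt e (F x (e x)) (Ioc x T) x :=
        (he x (Ico_subset_Icc_self hx)).mono (fun z hz => ⟨hx.1.trans hz.1.le, hz.2⟩)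
      have h1' : ∀ᶠ z in 𝓝[>] x, ‖e z - e x - (z - x) • F x (e x)‖ ≤ ε' * ‖z - x‖ := by
        have h := hasDerivWithinAt_iff_isLittleO.mp h1
        rw [nhdsWithin_Ioc_eq_nhdsGT hx.2] at h
        exact Asymptotics.isLittleO_iff.mp h hε'pos
      have h2 : ∀ᶠ s in 𝓝 (0:ℝ), ‖Γ s - y - s • F x y‖ ≤ ε' * ‖s‖ := by
        have h := Asymptotics.isLittleO_iff.mp (hasDerivAt_iff_isLittleO.mp hΓd) hε'pos
        simpa [hΓ0] using h
      have hzx : Tendsto (fun z : ℝ => z - x) (𝓝[>] x) (𝓝 0) := by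
        have : Tendsto (fun z : ℝ => z - x) (𝓝 x) (𝓝 (x - x)) :=
          (continuous_id.sub continuous_const).tendsto x
        rw [sub_self] at this
        exact this.mono_left nhdsWithin_le_nhds
      have h2' : ∀ᶠ z in 𝓝[>] x, ‖Γ (z - x) - y - (z - x) • F x y‖ ≤ ε' * ‖z - x‖ :=
        hzx.eventually h2
      refine Filter.Eventually.frequently ?_
      filter_upwards [h1', h2', self_mem_nhdsWithin] with z hz1 hz2 hz3
      have hs : (0:ℝ) < z - x := sub_pos.2 hz3
      have hnorm : ‖z - x‖ = z - x := by
        rw [Real.norm_eq_abs, abs_of_pos hs]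
      have hlipd : dist (F x (e x)) (F x y) ≤ ↑L * dist (e x) y :=
        (hlip x hx).dist_le_mul _ (heU x (Ico_subset_Icc_self hx)) _ (hKU hyK)
      have hφz : φ z ≤ dist (e z) (Γ (z - x)) := infDist_le_dist_of_mem (hΓK _)
      have iden : e z - Γ (z - x) =
          (e z - e x - (z - x) • F x (e x)) - (Γ (z - x) - y - (z - x) • F x y)
            + (e x - y) + (z - x) • (F x (e x) - F x y) := by
        rw [smul_sub]; abel
      have hbound : dist (e z) (Γ (z - x)) ≤
          ε' * (z - x) + ε' * (z - x) + φ x + (z - x) * (↑L * φ x) := by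
        rw [dist_eq_norm, iden]
        have hn1 : ‖(z - x) • (F x (e x) - F x y)‖ ≤ (z - x) * (↑L * φ x) := by
          rw [norm_smul, hnorm]
          have : ‖F x (e x) - F x y‖ ≤ ↑L * φ x := by
            rw [← dist_eq_norm, hφx]
            exact hlipd
          exact mul_le_mul_of_nonneg_left this hs.le
        have hn2 : ‖e x - y‖ = φ x := by rw [← dist_eq_norm, hφx]
        calc ‖_ - _ + (e x - y) + (z - x) • (F x (e x) - F x y)‖
            ≤ ‖(e z - e x - (z - x) • F x (e x)) - (Γ (z - x) - y - (z - x) • F x y)‖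
              + ‖e x - y‖ + ‖(z - x) • (F x (e x) - F x y)‖ := norm_add₃_le
          _ ≤ (‖e z - e x - (z - x) • F x (e x)‖ + ‖Γ (z - x) - y - (z - x) • F x y‖)
              + ‖e x - y‖ + ‖(z - x) • (F x (e x) - F x y)‖ := by
                gcongr
                exact norm_sub_le _ _
          _ ≤ (ε' * (z - x) + ε' * (z - x)) + φ x + (z - x) * (↑L * φ x) := by
                rw [hn2]
                gcongr
                · calc ‖e z - e x - (z - x) • F x (e x)‖ ≤ ε' * ‖z - x‖ := hz1
                    _ = ε' * (z - x) := by rw [hnorm]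
                · calc ‖Γ (z - x) - y - (z - x) • F x y‖ ≤ ε' * ‖z - x‖ := hz2
                    _ = ε' * (z - x) := by rw [hnorm]
          _ = ε' * (z - x) + ε' * (z - x) + φ x + (z - x) * (↑L * φ x) := by ring
      have hfinal : φ z - φ x ≤ (z - x) * (↑L * φ x + 2 * ε') := by
        have := hφz.trans hbound
        nlinarith
      have : (z - x)⁻¹ * (φ z - φ x) ≤ ↑L * φ x + 2 * ε' := by
        rw [inv_mul_le_iff₀ hs]
        exact hfinal
      have hlt : ↑L * φ x + 2 * ε' < r := by rw [hε']; linarith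
      exact this.trans_lt hlt
    · exact le_of_eq (infDist_zero_of_mem he₀)
    · intro x _
      simp
  intro t ht
  have h0 : φ t ≤ 0 := by
    have := key t ht
    rwa [gronwallBound_ε0_δ0] at this
  exact (hK.isClosed.mem_iff_infDist_zero hKne).mpr (le_antisymm h0 infDist_nonneg)

theorem aux_glue {E : Type*} [NormedAddCommGroup E] [NormedSpace ℝ E]
    {F : ℝ → E → E} {K : Set E} {l m r : ℝ} (hlm : l ≤ m) (hmr : m ≤ r)
    {d₁ d₂ : ℝ → E}
    (h₁ : ∀ t ∈ Icc l m, d₁ t ∈ K ∧ HasDerivWithinAt d₁ (F t (d₁ t)) (Icc l m) t)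
    (h₂ : ∀ t ∈ Icc m r, d₂ t ∈ K ∧ HasDerivWithinAt d₂ (F t (d₂ t)) (Icc m r) t)
    (hm : d₁ m = d₂ m) :
    ∃ d : ℝ → E, (∀ t ∈ Icc l m, d t = d₁ t) ∧
      ∀ t ∈ Icc l r, d t ∈ K ∧ HasDerivWithinAt d (F t (d t)) (Icc l r) t := by
  classical
  refine ⟨fun t => if t ≤ m then d₁ t else d₂ t, fun t ht => if_pos ht.2, fun t ht => ?_⟩
  set d : ℝ → E := fun t => if t ≤ m then d₁ t else d₂ t with hd
  have hIcc : Icc l m ∪ Icc m r = Icc l r := Icc_union_Icc_eq_Icc hlm hmr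
  have hd1 : ∀ s ∈ Icc l m, d s = d₁ s := fun s hs => if_pos hs.2
  have hd2 : ∀ s ∈ Icc m r, d s = d₂ s := by
    intro s hs
    by_cases h : s ≤ m
    · have : s = m := le_antisymm h hs.1
      simp [hd, this, hm]
    · exact if_neg h
  rcases lt_trichotomy t m with htm | htm | htm
  · have htIcc : t ∈ Icc l m := ⟨ht.1, htm.le⟩
    refine ⟨(hd1 t htIcc) ▸ (h₁ t htIcc).1, ?_⟩
    have hmem : Icc l m ∈ 𝓝[Icc l r] t := by
      apply mem_nhdsWithin.mpr
      exact ⟨Iio m, isOpen_Iio, htm, fun z hz => ⟨hz.2.1, hz.1.le⟩⟩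
    have hder : HasDerivWithinAt d₁ (F t (d₁ t)) (Icc l r) t :=
      ((h₁ t htIcc).2).mono_of_mem_nhdsWithin hmem
    have heq : d =ᶠ[𝓝[Icc l r] t] d₁ := by
      filter_upwards [hmem] with z hz using hd1 z hz
    have := hder.congr_of_eventuallyEq heq (hd1 t htIcc)
    rwa [hd1 t htIcc]
  · subst htm
    have ht1 : t ∈ Icc l t := ⟨ht.1, le_rfl⟩
    have ht2 : t ∈ Icc t r := ⟨le_rfl, ht.2⟩
    refine ⟨(hd1 t ht1) ▸ (h₁ t ht1).1, ?_⟩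
    have hA : HasDerivWithinAt d (F t (d t)) (Icc l t) t := by
      have := (h₁ t ht1).2.congr (fun z hz => (hd1 z hz)) (hd1 t ht1)
      rwa [hd1 t ht1]
    have hB : HasDerivWithinAt d (F t (d t)) (Icc t r) t := by
      have h2t := (h₂ t ht2).2.congr (fun z hz => (hd2 z hz)) (hd2 t ht2)
      rw [← hd2 t ht2] at h2t
      exact h2t
    have := hA.union hB
    rwa [Icc_union_Icc_eq_Icc ht.1 ht.2] at this
  · have htIcc : t ∈ Icc m r := ⟨htm.le, ht.2⟩
    refine ⟨(hd2 t htIcc) ▸ (h₂ t htIcc).1, ?_⟩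
    have hmem : Icc m r ∈ 𝓝[Icc l r] t := by
      apply mem_nhdsWithin.mpr
      exact ⟨Ioi m, isOpen_Ioi, htm, fun z hz => ⟨hz.1.le, hz.2.2⟩⟩
    have hder : HasDerivWithinAt d₂ (F t (d₂ t)) (Icc l r) t :=
      ((h₂ t htIcc).2).mono_of_mem_nhdsWithin hmem
    have heq : d =ᶠ[𝓝[Icc l r] t] d₂ := by
      filter_upwards [hmem] with z hz using hd2 z hz
    have := hder.congr_of_eventuallyEq heq (hd2 t htIcc)
    rwa [hd2 t htIcc]

theorem aux_main {E : Type*} [NormedAddCommGroup E] [NormedSpace ℝ E] [CompleteSpace E]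
    {K U : Set E} (hK : IsCompact K) (hKne : K.Nonempty) (hKU : K ⊆ U)
    {ε₀ : ℝ} (hε₀ : 0 < ε₀) (hball : ∀ x ∈ K, Metric.closedBall x ε₀ ⊆ U)
    {F : ℝ → E → E} {L : ℝ≥0} {C T : ℝ} (hC : 0 ≤ C) (hT : 0 ≤ T)
    (hlip : ∀ t ∈ Icc 0 T, LipschitzOnWith L (F t) U)
    (hcont : ∀ x ∈ U, ContinuousOn (fun t => F t x) (Icc 0 T))
    (hbd : ∀ t ∈ Icc 0 T, ∀ x ∈ U, ‖F t x‖ ≤ C)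
    (htan : ∀ t ∈ Icc 0 T, ∀ y ∈ K, ∃ Γ : ℝ → E,
      (∀ s, Γ s ∈ K) ∧ Γ 0 = y ∧ HasDerivAt Γ (F t y) 0)
    {x_init : E} (hx : x_init ∈ K) :
    ∃ d : ℝ → E, d 0 = x_init ∧
      ∀ t ∈ Icc 0 T, d t ∈ K ∧ HasDerivWithinAt d (F t (d t)) (Icc 0 T) t := by
  set τ := ε₀ / (C + 1) with hτ
  have hC1 : (0:ℝ) < C + 1 := by linarith
  have hτpos : 0 < τ := div_pos hε₀ hC1
  have local_sol : ∀ t₀ ∈ Icc 0 T, ∀ x₀ ∈ K, ∀ T₂, t₀ ≤ T₂ → T₂ ≤ T → T₂ - t₀ ≤ τ →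
      ∃ e : ℝ → E, e t₀ = x₀ ∧ ∀ t ∈ Icc t₀ T₂,
        e t ∈ K ∧ HasDerivWithinAt e (F t (e t)) (Icc t₀ T₂) t := by
    intro t₀ ht₀ x₀ hx₀ T₂ h12 h2T hstep
    have hsub : Icc t₀ T₂ ⊆ Icc 0 T := Icc_subset_Icc ht₀.1 h2T
    have hpl : OldIsPicardLindelof F t₀ t₀ T₂ x₀ L ε₀ C :=
      { ht₀ := ⟨le_rfl, h12⟩
        hR := hε₀.le
        lipschitz := fun t ht => (hlip t (hsub ht)).mono (hball x₀ hx₀)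
        cont := fun x hxball => (hcont x (hball x₀ hx₀ hxball)).mono hsub
        norm_le := fun t ht x hxball => hbd t (hsub ht) x (hball x₀ hx₀ hxball)
        C_mul_le_R := by
          rw [sub_self, max_eq_left (sub_nonneg.2 h12)]
          calc C * (T₂ - t₀) ≤ C * τ := mul_le_mul_of_nonneg_left hstep hC
            _ ≤ ε₀ := by
              rw [hτ, ← mul_div_assoc, div_le_iff₀ hC1]
              nlinarith }
    obtain ⟨e, he0, he⟩ := aux_pl_mem x₀ hpl
    refine ⟨e, he0, fun t ht => ⟨?_, (he t ht).2⟩⟩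
    exact aux_invariance hK hKne hKU
      (fun s hs => hlip s (hsub (Ico_subset_Icc_self hs)))
      (fun s hs y hy => htan s (hsub (Ico_subset_Icc_self hs)) y hy)
      (fun s hs => (he s hs).2) (fun s hs => hball x₀ hx₀ (he s hs).1)
      (by rw [he0]; exact hx₀) t ht
  have Q : ∀ n : ℕ, ∃ d : ℝ → E, d 0 = x_init ∧
      ∀ t ∈ Icc 0 (min (((n:ℝ)+1) * τ) T), d t ∈ K ∧
        HasDerivWithinAt d (F t (d t)) (Icc 0 (min (((n:ℝ)+1) * τ) T)) t := by
    intro n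
    induction n with
    | zero =>
      have h0T : (0:ℝ) ∈ Icc 0 T := left_mem_Icc.2 hT
      obtain ⟨e, he0, he⟩ := local_sol 0 h0T x_init hx (min ((((0:ℕ):ℝ)+1) * τ) T)
        (le_min (by positivity) hT) (min_le_right _ _)
        (by rw [sub_zero]; calc min ((((0:ℕ):ℝ)+1)*τ) T ≤ (((0:ℕ):ℝ)+1)*τ := min_le_left _ _
              _ = τ := by norm_num)
      exact ⟨e, he0, he⟩
    | succ n ih =>
      obtain ⟨d, hd0, hd⟩ := ih
      have hcast : ((n+1 : ℕ):ℝ) + 1 = (n:ℝ) + 2 := by push_cast; ring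
      rw [hcast]
      by_cases hTle : T ≤ ((n:ℝ)+1) * τ
      · have h1 : min (((n:ℝ)+1) * τ) T = T := min_eq_right hTle
        have h2 : min (((n:ℝ)+2) * τ) T = T := min_eq_right (by nlinarith)
        rw [h1] at hd
        rw [h2]
        exact ⟨d, hd0, hd⟩
      · push_neg at hTle
        set T₁ := min (((n:ℝ)+1) * τ) T with hT₁def
        set T₂ := min (((n:ℝ)+2) * τ) T with hT₂def
        have hT₁ : T₁ = ((n:ℝ)+1) * τ := min_eq_left hTle.le
        have hT₁0 : 0 ≤ T₁ := le_min (by positivity) hT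
        have hT₁T : T₁ ≤ T := min_le_right _ _
        have hT₁2 : T₁ ≤ T₂ := min_le_min (by nlinarith) le_rfl
        have hT₂T : T₂ ≤ T := min_le_right _ _
        have hstep : T₂ - T₁ ≤ τ := by
          rw [hT₁]
          calc T₂ - ((n:ℝ)+1)*τ ≤ ((n:ℝ)+2)*τ - ((n:ℝ)+1)*τ := by
                have := min_le_left (((n:ℝ)+2) * τ) T
                linarith
            _ = τ := by ring
        have hdT₁K : d T₁ ∈ K := (hd T₁ ⟨hT₁0, le_rfl⟩).1
        obtain ⟨e, he0, he⟩ := local_sol T₁ ⟨hT₁0, hT₁T⟩ (d T₁) hdT₁K T₂ hT₁2 hT₂T hstep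
        obtain ⟨d', hd'eq, hd'⟩ := aux_glue hT₁0 hT₁2 hd he he0.symm
        exact ⟨d', by rw [hd'eq 0 ⟨le_rfl, hT₁0⟩]; exact hd0, hd'⟩
  obtain ⟨n, hn⟩ := exists_nat_ge (T / τ)
  obtain ⟨d, hd0, hd⟩ := Q n
  have hTn : T ≤ ((n:ℝ)+1) * τ := by
    rw [div_le_iff₀ hτpos] at hn
    nlinarith
  rw [min_eq_right hTn] at hd
  exact ⟨d, hd0, hd⟩

set_option maxHeartbeats 2000000 in
/-- Let `G` be a Lie group (formalized as the unit group of a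
finite-dimensional normed algebra `A`, so that `Lie(G) = A`, `(L_g)_* v = g * v`,
`Ad(g)v = g v g⁻¹`), `H` a compact subgroup with Lie algebra `h = V` (the set of initial
velocities of smooth curves in `H` through the identity), and `g = V + M` a linear
decomposition with `h`-projection `P`. For any smooth curve `g(t)` in `G` defined on
`(a,b)` with `a < 0 < b`, the ODE
`h'(t) + (L_{h(t)})_* ((Ad(h(t)⁻¹)((L_{g(t)⁻¹})_* g'(t)))_h) = 0`, `h(0) = e`,
has a solution with values in `H` defined on all of `(a,b)`. -/
theorem compact_isotropy_ode_global_existence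
    {A : Type*} [NormedRing A] [NormedAlgebra ℝ A] [CompleteSpace A]
    [FiniteDimensional ℝ A]
    (H : Subgroup Aˣ)
    (hHcompact : IsCompact ((fun u : Aˣ => (u : A)) '' (H : Set Aˣ)))
    (V M : Submodule ℝ A) (hcompl : IsCompl V M)
    (hV : ∀ v : A, v ∈ V ↔ ∃ γ : ℝ → A,
      (∀ t : ℝ, ∃ u : Aˣ, u ∈ H ∧ (u : A) = γ t) ∧ γ 0 = 1 ∧ HasDerivAt γ v 0)
    (P : A →ₗ[ℝ] A)
    (hP : P = V.subtype.comp (Submodule.linearProjOfIsCompl V M hcompl))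
    {a b : ℝ} (ha : a < 0) (hb : 0 < b)
    (g : ℝ → A) (hgu : ∀ t ∈ Ioo a b, IsUnit (g t))
    (hg : ContDiffOn ℝ (⊤ : ℕ∞) g (Ioo a b)) :
    ∃ c : ℝ → A, c 0 = 1 ∧
      ∀ t ∈ Ioo a b,
        (∃ u : Aˣ, u ∈ H ∧ (u : A) = c t) ∧
        HasDerivAt c
          (-(c t * P (Ring.inverse (c t) * (Ring.inverse (g t) * deriv g t) * c t))) t := by
  classical
  set K : Set A := (fun u : Aˣ => (u : A)) '' (H : Set Aˣ) with hKdef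
  have hK1 : (1:A) ∈ K := ⟨1, H.one_mem, rfl⟩
  have hKne : K.Nonempty := ⟨1, hK1⟩
  have hKunit : ∀ x ∈ K, IsUnit x := by rintro x ⟨u, hu, rfl⟩; exact u.isUnit
  have hKmul : ∀ x ∈ K, ∀ y ∈ K, x * y ∈ K := by
    rintro x ⟨u, hu, rfl⟩ y ⟨w, hw, rfl⟩
    exact ⟨u * w, H.mul_mem hu hw, rfl⟩
  obtain ⟨δ, hδpos, hδsub⟩ :=
    hHcompact.exists_cthickening_subset_open Units.isOpen (fun x hx => hKunit x hx)
  set U : Set A := Metric.cthickening δ K with hUdef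
  have hKU : K ⊆ U := Metric.self_subset_cthickening K
  have hUunit : ∀ x ∈ U, IsUnit x := fun x hx => hδsub hx
  have hball : ∀ x ∈ K, Metric.closedBall x δ ⊆ U :=
    fun x hx => Metric.closedBall_subset_cthickening hx δ
  have hUcpt : IsCompact U := Metric.isCompact_of_isClosed_isBounded
    Metric.isClosed_cthickening (hHcompact.isBounded.cthickening)
  -- the vector field
  set X : ℝ → A := fun t => Ring.inverse (g t) * deriv g t with hXdef
  set F : ℝ → A → A := fun t x => -(x * P (Ring.inverse x * X t * x)) with hFdef
  have hPV : ∀ z : A, P z ∈ V := by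
    intro z; rw [hP]
    exact (Submodule.linearProjOfIsCompl V M hcompl z).2
  set Pc : A →L[ℝ] A := LinearMap.toContinuousLinearMap P with hPcdef
  have hPb : ∀ z : A, ‖P z‖ ≤ ‖Pc‖ * ‖z‖ := fun z => Pc.le_opNorm z
  -- tangency curves
  have tang : ∀ y ∈ K, ∀ w ∈ V, ∃ Γ : ℝ → A,
      (∀ s, Γ s ∈ K) ∧ Γ 0 = y ∧ HasDerivAt Γ (y * w) 0 := by
    intro y hyK w hw
    obtain ⟨γ, hγK, hγ0, hγd⟩ := (hV w).mp hw
    refine ⟨fun s => y * γ s, fun s => ?_, by show y * γ 0 = y; rw [hγ0, mul_one], hγd.const_mul y⟩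
    obtain ⟨u, huH, hu⟩ := hγK s
    exact hKmul y hyK _ ⟨u, huH, hu⟩
  -- continuity of X
  have hXcont : ContinuousOn X (Ioo a b) := by
    have hginv : ContinuousOn (fun t => Ring.inverse (g t)) (Ioo a b) := by
      intro t ht
      obtain ⟨u, hu⟩ := hgu t ht
      have h2 : ContinuousAt Ring.inverse (g t) := by
        rw [← hu]; exact NormedRing.inverse_continuousAt u
      exact h2.comp_continuousWithinAt ((hg.continuousOn) t ht)
    exact hginv.mul (hg.continuousOn_deriv_of_isOpen isOpen_Ioo (by simp))
  -- bounds on U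
  have hinvcont : ContinuousOn (fun x : A => Ring.inverse x) U := by
    intro x hx
    have h2 : ContinuousAt Ring.inverse x := by
      rw [← (hUunit x hx).unit_spec]
      exact NormedRing.inverse_continuousAt (hUunit x hx).unit
    exact h2.continuousWithinAt
  obtain ⟨B₁, hB₁⟩ := hUcpt.exists_bound_of_continuousOn continuousOn_id
  obtain ⟨B₂, hB₂⟩ := hUcpt.exists_bound_of_continuousOn hinvcont
  set B : ℝ := max (max B₁ B₂) 1 with hBdef
  have hB1 : (1:ℝ) ≤ B := le_max_right _ _
  have hB0 : (0:ℝ) < B := lt_of_lt_of_le one_pos hB1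
  have hBx : ∀ x ∈ U, ‖x‖ ≤ B := fun x hx =>
    (hB₁ x hx).trans ((le_max_left B₁ B₂).trans (le_max_left _ _))
  have hBinv : ∀ x ∈ U, ‖Ring.inverse x‖ ≤ B := fun x hx =>
    (hB₂ x hx).trans ((le_max_right B₁ B₂).trans (le_max_left _ _))
  have hinvlip : ∀ x ∈ U, ∀ y ∈ U,
      ‖Ring.inverse x - Ring.inverse y‖ ≤ B^2 * ‖x - y‖ := by
    intro x hxU y hyU
    obtain ⟨ux, hux⟩ := hUunit x hxU
    obtain ⟨uy, huy⟩ := hUunit y hyU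
    have hx' : Ring.inverse x = ↑ux⁻¹ := by rw [← hux, Ring.inverse_unit]
    have hy' : Ring.inverse y = ↑uy⁻¹ := by rw [← huy, Ring.inverse_unit]
    have iden : (↑ux⁻¹ : A) - ↑uy⁻¹ = ↑ux⁻¹ * (y - x) * ↑uy⁻¹ := by
      rw [mul_sub, sub_mul]
      rw [← huy]
      rw [mul_assoc ((ux⁻¹ : Aˣ) : A) (uy : A) ((uy⁻¹ : Aˣ) : A)]
      rw [Units.mul_inv, mul_one]
      rw [← hux]
      rw [Units.inv_mul, one_mul]
    rw [hx', hy', iden]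
    calc ‖(↑ux⁻¹ : A) * (y - x) * ↑uy⁻¹‖
        ≤ ‖(↑ux⁻¹ : A) * (y - x)‖ * ‖(↑uy⁻¹ : A)‖ := norm_mul_le _ _
      _ ≤ ‖(↑ux⁻¹ : A)‖ * ‖y - x‖ * ‖(↑uy⁻¹ : A)‖ := by
          gcongr
          exact norm_mul_le _ _
      _ ≤ B * ‖y - x‖ * B := by
          gcongr
          · rw [← hx']; exact hBinv x hxU
          · rw [← hy']; exact hBinv y hyU
      _ = B^2 * ‖x - y‖ := by rw [norm_sub_rev]; ring
  -- constants on compact subintervals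
  have consts : ∀ l r : ℝ, Icc l r ⊆ Ioo a b → ∃ (Ln : ℝ≥0) (C : ℝ), 0 ≤ C ∧
      (∀ t ∈ Icc l r, LipschitzOnWith Ln (F t) U) ∧
      (∀ t ∈ Icc l r, ∀ x ∈ U, ‖F t x‖ ≤ C) ∧
      (∀ x ∈ U, ContinuousOn (fun t => F t x) (Icc l r)) := by
    intro l r hlr
    obtain ⟨CX₀, hCX₀⟩ := isCompact_Icc.exists_bound_of_continuousOn (hXcont.mono hlr)
    set CX : ℝ := max CX₀ 0 with hCXdef
    have hCX : ∀ t ∈ Icc l r, ‖X t‖ ≤ CX := fun t ht => (hCX₀ t ht).trans (le_max_left _ _)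
    have hCX0 : (0:ℝ) ≤ CX := le_max_right _ _
    have hNP : (0:ℝ) ≤ ‖Pc‖ := norm_nonneg _
    set L₀ : ℝ := ‖Pc‖ * (B * CX * B) + B * (‖Pc‖ * (B^2 * CX * B + B * CX)) with hL₀def
    have hL₀0 : 0 ≤ L₀ := by positivity
    have hq : ∀ t ∈ Icc l r, ∀ x ∈ U, ‖Ring.inverse x * X t * x‖ ≤ B * CX * B := by
      intro t ht x hx
      calc ‖Ring.inverse x * X t * x‖ ≤ ‖Ring.inverse x * X t‖ * ‖x‖ := norm_mul_le _ _
        _ ≤ ‖Ring.inverse x‖ * ‖X t‖ * ‖x‖ := by gcongr; exact norm_mul_le _ _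
        _ ≤ B * CX * B := by
            gcongr
            · exact hBinv x hx
            · exact hCX t ht
            · exact hBx x hx
    refine ⟨Real.toNNReal L₀, B * (‖Pc‖ * (B * CX * B)), by positivity, ?_, ?_, ?_⟩
    · intro t ht
      apply LipschitzOnWith.of_dist_le_mul
      intro x hxU y hyU
      rw [dist_eq_norm, dist_eq_norm, Real.coe_toNNReal _ hL₀0]
      set qx := Ring.inverse x * X t * x with hqx
      set qy := Ring.inverse y * X t * y with hqy
      have hqd : ‖qx - qy‖ ≤ (B^2 * CX * B + B * CX) * ‖x - y‖ := by
        have iden : qx - qy = (Ring.inverse x - Ring.inverse y) * X t * x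
            + Ring.inverse y * X t * (x - y) := by
          rw [hqx, hqy, sub_mul, sub_mul, mul_sub]
          abel
        rw [iden]
        calc ‖(Ring.inverse x - Ring.inverse y) * X t * x + Ring.inverse y * X t * (x - y)‖
            ≤ ‖(Ring.inverse x - Ring.inverse y) * X t * x‖
              + ‖Ring.inverse y * X t * (x - y)‖ := norm_add_le _ _
          _ ≤ ‖Ring.inverse x - Ring.inverse y‖ * ‖X t‖ * ‖x‖
              + ‖Ring.inverse y‖ * ‖X t‖ * ‖x - y‖ := by
              gcongr
              · calc ‖(Ring.inverse x - Ring.inverse y) * X t * x‖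
                    ≤ ‖(Ring.inverse x - Ring.inverse y) * X t‖ * ‖x‖ := norm_mul_le _ _
                  _ ≤ ‖Ring.inverse x - Ring.inverse y‖ * ‖X t‖ * ‖x‖ := by
                      gcongr; exact norm_mul_le _ _
              · calc ‖Ring.inverse y * X t * (x - y)‖
                    ≤ ‖Ring.inverse y * X t‖ * ‖x - y‖ := norm_mul_le _ _
                  _ ≤ ‖Ring.inverse y‖ * ‖X t‖ * ‖x - y‖ := by
                      gcongr; exact norm_mul_le _ _
          _ ≤ (B^2 * ‖x - y‖) * CX * B + B * CX * ‖x - y‖ := by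
              gcongr
              · exact hinvlip x hxU y hyU
              · exact hCX t ht
              · exact hBx x hxU
              · exact hBinv y hyU
              · exact hCX t ht
          _ = (B^2 * CX * B + B * CX) * ‖x - y‖ := by ring
      have hFd : F t x - F t y = -((x - y) * P qx + y * (P qx - P qy)) := by
        have h1 : F t x = -(x * P qx) := rfl
        have h2 : F t y = -(y * P qy) := rfl
        have h3 : x * P qx - y * P qy = (x - y) * P qx + y * (P qx - P qy) := by
          rw [sub_mul, mul_sub]; abel
        rw [h1, h2, neg_sub_neg, ← h3, neg_sub]
      calc ‖F t x - F t y‖ = ‖(x - y) * P qx + y * (P qx - P qy)‖ := by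
            rw [hFd, norm_neg]
        _ ≤ ‖(x - y) * P qx‖ + ‖y * (P qx - P qy)‖ := norm_add_le _ _
        _ ≤ ‖x - y‖ * ‖P qx‖ + ‖y‖ * ‖P qx - P qy‖ := by
            gcongr <;> exact norm_mul_le _ _
        _ ≤ ‖x - y‖ * (‖Pc‖ * (B * CX * B))
            + B * (‖Pc‖ * ((B^2 * CX * B + B * CX) * ‖x - y‖)) := by
            gcongr
            · exact (hPb _).trans (by gcongr; exact hq t ht x hxU)
            · exact hBx y hyU
            · calc ‖P qx - P qy‖ = ‖P (qx - qy)‖ := by rw [map_sub]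
                _ ≤ ‖Pc‖ * ‖qx - qy‖ := hPb _
                _ ≤ ‖Pc‖ * ((B^2 * CX * B + B * CX) * ‖x - y‖) := by gcongr
        _ = L₀ * ‖x - y‖ := by rw [hL₀def]; ring
    · intro t ht x hx
      rw [hFdef]
      simp only [norm_neg]
      calc ‖x * P (Ring.inverse x * X t * x)‖
          ≤ ‖x‖ * ‖P (Ring.inverse x * X t * x)‖ := norm_mul_le _ _
        _ ≤ B * (‖Pc‖ * (B * CX * B)) := by
            gcongr
            · exact hBx x hx
            · calc ‖P (Ring.inverse x * X t * x)‖
                  ≤ ‖Pc‖ * ‖Ring.inverse x * X t * x‖ := hPb _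
                _ ≤ ‖Pc‖ * (B * CX * B) := by gcongr; exact hq t ht x hx
    · intro x hx
      have c1 : ContinuousOn (fun t => Ring.inverse x * X t * x) (Icc l r) :=
        (continuousOn_const.mul (hXcont.mono hlr)).mul continuousOn_const
      have c2 : ContinuousOn (fun t => P (Ring.inverse x * X t * x)) (Icc l r) :=
        Pc.continuous.comp_continuousOn c1
      exact (continuousOn_const.mul c2).neg
  -- exhausting sequences
  set fr : ℕ → ℝ := fun n => 1 - (1 / ((n:ℝ) + 1)) / 2 with hfrdef
  have hfrpos : ∀ n, 0 < fr n := by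
    intro n
    have h1 : 1 / ((n:ℝ) + 1) ≤ 1 := by
      rw [div_le_one (by positivity)]
      linarith [Nat.cast_nonneg (α := ℝ) n]
    have h2 : (0:ℝ) < 1 / ((n:ℝ) + 1) := by positivity
    show (0:ℝ) < 1 - (1 / ((n:ℝ) + 1)) / 2
    linarith
  have hfrlt : ∀ n, fr n < 1 := by
    intro n
    have h2 : (0:ℝ) < 1 / ((n:ℝ) + 1) := by positivity
    show 1 - (1 / ((n:ℝ) + 1)) / 2 < 1
    linarith
  have hfrlim : Filter.Tendsto fr Filter.atTop (𝓝 1) := by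
    have h0 := tendsto_one_div_add_atTop_nhds_zero_nat (𝕜 := ℝ)
    have h1 := h0.div_const 2
    have h2 : Filter.Tendsto fr Filter.atTop (𝓝 (1 - 0/2)) := tendsto_const_nhds.sub h1
    simpa using h2
  set l : ℕ → ℝ := fun n => a * fr n with hldef
  set r : ℕ → ℝ := fun n => b * fr n with hrdef
  have hla : ∀ n, a < l n := by
    intro n
    have h1 := hfrlt n
    have h2 := hfrpos n
    show a < a * fr n
    nlinarith
  have hl0 : ∀ n, l n < 0 := fun n => mul_neg_of_neg_of_pos ha (hfrpos n)
  have hr0 : ∀ n, 0 < r n := fun n => mul_pos hb (hfrpos n)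
  have hrb : ∀ n, r n < b := by
    intro n
    have h1 := hfrlt n
    have h2 := hfrpos n
    show b * fr n < b
    nlinarith
  have hsubn : ∀ n, Icc (l n) (r n) ⊆ Ioo a b := fun n t ht =>
    ⟨(hla n).trans_le ht.1, lt_of_le_of_lt ht.2 (hrb n)⟩
  have hfrmono : ∀ m n : ℕ, m ≤ n → fr m ≤ fr n := by
    intro m n hmn
    have h1 : 1 / ((n:ℝ)+1) ≤ 1 / ((m:ℝ)+1) := by
      apply one_div_le_one_div_of_le (by positivity)
      have : (m:ℝ) ≤ n := Nat.cast_le.2 hmn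
      linarith
    show 1 - (1 / ((m:ℝ) + 1)) / 2 ≤ 1 - (1 / ((n:ℝ) + 1)) / 2
    linarith
  have hlmono : ∀ m n : ℕ, m ≤ n → l n ≤ l m := fun m n hmn =>
    mul_le_mul_of_nonpos_left (hfrmono m n hmn) ha.le
  have hrmono : ∀ m n : ℕ, m ≤ n → r m ≤ r n := fun m n hmn =>
    mul_le_mul_of_nonneg_left (hfrmono m n hmn) hb.le
  -- solutions on each Icc (l n) (r n)
  have SOL : ∀ n : ℕ, ∃ (Ln : ℝ≥0) (d : ℝ → A), d 0 = 1 ∧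
      (∀ t ∈ Icc (l n) (r n), LipschitzOnWith Ln (F t) U) ∧
      ∀ t ∈ Icc (l n) (r n), d t ∈ K ∧
        HasDerivWithinAt d (F t (d t)) (Icc (l n) (r n)) t := by
    intro n
    obtain ⟨Ln, C, hC0, hlipn, hbdn, hcontn⟩ := consts (l n) (r n) (hsubn n)
    have hsubR : Icc (0:ℝ) (r n) ⊆ Icc (l n) (r n) := Icc_subset_Icc (hl0 n).le le_rfl
    obtain ⟨dR, hdR0, hdR⟩ := aux_main (E := A) hHcompact hKne hKU hδpos hball hC0 (hr0 n).le
      (fun t ht => hlipn t (hsubR ht))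
      (fun x hx => (hcontn x hx).mono hsubR)
      (fun t ht x hx => hbdn t (hsubR ht) x hx)
      (fun t ht y hy => by
        obtain ⟨Γ, h1, h2, h3⟩ := tang y hy (-(P (Ring.inverse y * X t * y))) (neg_mem (hPV _))
        refine ⟨Γ, h1, h2, ?_⟩
        convert h3 using 1
        show -(y * P (Ring.inverse y * X t * y)) = y * -(P (Ring.inverse y * X t * y))
        rw [mul_neg]
        rfl) hK1
    have hmaps : ∀ t ∈ Icc (0:ℝ) (-(l n)), -t ∈ Icc (l n) (r n) := by
      intro t ht
      constructor
      · linarith [ht.2]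
      · have h1 : -t ≤ 0 := neg_nonpos.2 ht.1
        linarith [hr0 n]
    obtain ⟨dL', hdL'0, hdL'⟩ := aux_main (E := A) (F := fun t x => -(F (-t) x))
      hHcompact hKne hKU hδpos hball hC0 (neg_nonneg.2 (hl0 n).le)
      (fun t ht => by
        apply LipschitzOnWith.of_dist_le_mul
        intro x hx y hy
        have h1 := (hlipn (-t) (hmaps t ht)).dist_le_mul x hx y hy
        show dist (-(F (-t) x)) (-(F (-t) y)) ≤ _
        rwa [dist_neg_neg])
      (fun x hx => (((hcontn x hx).comp continuousOn_neg (fun t ht => hmaps t ht)).neg))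
      (fun t ht x hx => by
        show ‖-(F (-t) x)‖ ≤ C
        rw [norm_neg]; exact hbdn (-t) (hmaps t ht) x hx)
      (fun t ht y hy => by
        obtain ⟨Γ, h1, h2, h3⟩ := tang y hy (P (Ring.inverse y * X (-t) * y)) (hPV _)
        refine ⟨Γ, h1, h2, ?_⟩
        convert h3 using 1
        show -(-(y * P (Ring.inverse y * X (-t) * y))) = y * P (Ring.inverse y * X (-t) * y)
        rw [neg_neg]
        rfl) hK1
    set dL : ℝ → A := fun t => dL' (-t) with hdLdef
    have hdLsol : ∀ t ∈ Icc (l n) 0, dL t ∈ K ∧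
        HasDerivWithinAt dL (F t (dL t)) (Icc (l n) 0) t := by
      intro t ht
      have hmt : -t ∈ Icc (0:ℝ) (-(l n)) := ⟨neg_nonneg.2 ht.2, neg_le_neg ht.1⟩
      obtain ⟨hmem, hder⟩ := hdL' (-t) hmt
      refine ⟨hmem, ?_⟩
      have hneg : HasDerivWithinAt (fun s : ℝ => -s) (-1) (Icc (l n) 0) t :=
        (hasDerivAt_neg t).hasDerivWithinAt
      have hmap2 : MapsTo (fun s : ℝ => -s) (Icc (l n) 0) (Icc 0 (-(l n))) :=
        fun s hs => ⟨neg_nonneg.2 hs.2, neg_le_neg hs.1⟩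
      have hc := HasDerivWithinAt.scomp t hder hneg hmap2
      have hval : ((-1 : ℝ) • (-(F (-(-t)) (dL' (-t))))) = F t (dL t) := by
        rw [neg_neg, neg_one_smul, neg_neg]
      rw [← hval]
      exact hc
    obtain ⟨d, hdeq, hd⟩ := aux_glue (hl0 n).le (hr0 n).le hdLsol hdR (by
      show dL 0 = dR 0
      rw [hdR0]
      show dL' (-0) = 1
      rw [neg_zero, hdL'0])
    refine ⟨Ln, d, ?_, hlipn, hd⟩
    rw [hdeq 0 ⟨(hl0 n).le, le_rfl⟩]
    show dL' (-0) = 1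
    rw [neg_zero, hdL'0]
  choose Ln dn hdn0 hdnlip hdnsol using SOL
  have hex : ∀ t ∈ Ioo a b, ∃ n, t ∈ Ioo (l n) (r n) := by
    intro t ht
    have h1 : Filter.Tendsto l Filter.atTop (𝓝 (a * 1)) := tendsto_const_nhds.mul hfrlim
    have h2 : Filter.Tendsto r Filter.atTop (𝓝 (b * 1)) := tendsto_const_nhds.mul hfrlim
    rw [mul_one] at h1 h2
    have e1 : ∀ᶠ n in Filter.atTop, l n < t := h1.eventually_lt_const ht.1
    have e2 : ∀ᶠ n in Filter.atTop, t < r n := h2.eventually_const_lt ht.2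
    obtain ⟨n, hn1, hn2⟩ := (e1.and e2).exists
    exact ⟨n, hn1, hn2⟩
  have huniq : ∀ (m k : ℕ) (s : ℝ), s ∈ Ioo (l m) (r m) → s ∈ Ioo (l k) (r k) →
      dn m s = dn k s := by
    intro m k s hsm hsk
    set p := min m k with hp
    have hpm : p ≤ m := min_le_left _ _
    have hpk : p ≤ k := min_le_right _ _
    set S : ℝ → Set A := fun t => if t ∈ Icc (l p) (r p) then U else (∅ : Set A) with hS
    have hv : ∀ t, LipschitzOnWith (Ln p) (F t) (S t) := by
      intro t
      by_cases hmem : t ∈ Icc (l p) (r p)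
      · show LipschitzOnWith _ _ (if t ∈ Icc (l p) (r p) then U else (∅ : Set A))
        rw [if_pos hmem]; exact hdnlip p t hmem
      · show LipschitzOnWith _ _ (if t ∈ Icc (l p) (r p) then U else (∅ : Set A))
        rw [if_neg hmem]; exact lipschitzOnWith_empty _ _
    have h0W : (0:ℝ) ∈ Ioo (l p) (r p) := ⟨hl0 p, hr0 p⟩
    have hWm : Ioo (l p) (r p) ⊆ Ioo (l m) (r m) :=
      Ioo_subset_Ioo (hlmono p m hpm) (hrmono p m hpm)
    have hWk : Ioo (l p) (r p) ⊆ Ioo (l k) (r k) :=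
      Ioo_subset_Ioo (hlmono p k hpk) (hrmono p k hpk)
    have hSU : ∀ u ∈ Ioo (l p) (r p), U = S u := by
      intro u hu
      show U = if u ∈ Icc (l p) (r p) then U else (∅ : Set A)
      rw [if_pos (Ioo_subset_Icc_self hu)]
    have heqon := ODE_solution_unique_of_mem_Ioo (fun t _ => hv t) h0W
      (f := dn m) (g := dn k)
      (fun u hu => ⟨((hdnsol m u (Ioo_subset_Icc_self (hWm hu))).2).hasDerivAt
          (Icc_mem_nhds (hWm hu).1 (hWm hu).2),
        (hSU u hu) ▸ hKU (hdnsol m u (Ioo_subset_Icc_self (hWm hu))).1⟩)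
      (fun u hu => ⟨((hdnsol k u (Ioo_subset_Icc_self (hWk hu))).2).hasDerivAt
          (Icc_mem_nhds (hWk hu).1 (hWk hu).2),
        (hSU u hu) ▸ hKU (hdnsol k u (Ioo_subset_Icc_self (hWk hu))).1⟩)
      (by rw [hdn0 m, hdn0 k])
    have hsp : s ∈ Ioo (l p) (r p) := by
      rcases le_total m k with hmk | hmk
      · rw [hp, min_eq_left hmk]; exact hsm
      · rw [hp, min_eq_right hmk]; exact hsk
    exact heqon hsp
  have hex0 : ∃ n, (0:ℝ) ∈ Ioo (l n) (r n) := ⟨0, hl0 0, hr0 0⟩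
  set c : ℝ → A := fun t =>
    if h : ∃ n, t ∈ Ioo (l n) (r n) then dn (Nat.find h) t else 1 with hcdef
  have hcval : ∀ (t : ℝ) (h : ∃ n, t ∈ Ioo (l n) (r n)), c t = dn (Nat.find h) t :=
    fun t h => dif_pos h
  have hc0 : c 0 = 1 := by rw [hcval 0 hex0, hdn0]
  refine ⟨c, hc0, fun t ht => ?_⟩
  have h := hex t ht
  set n₀ := Nat.find h with hn₀
  have hmem : t ∈ Ioo (l n₀) (r n₀) := Nat.find_spec h
  have heqnbhd : ∀ s ∈ Ioo (l n₀) (r n₀), c s = dn n₀ s := by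
    intro s hs
    have hs' : ∃ n, s ∈ Ioo (l n) (r n) := ⟨n₀, hs⟩
    rw [hcval s hs']
    exact huniq (Nat.find hs') n₀ s (Nat.find_spec hs') hs
  have hctK : c t ∈ K := by
    rw [heqnbhd t hmem]
    exact (hdnsol n₀ t (Ioo_subset_Icc_self hmem)).1
  constructor
  · obtain ⟨u, huH, hu⟩ := hctK
    exact ⟨u, huH, hu⟩
  · have hder : HasDerivAt (dn n₀) (F t (dn n₀ t)) t :=
      ((hdnsol n₀ t (Ioo_subset_Icc_self hmem)).2).hasDerivAt (Icc_mem_nhds hmem.1 hmem.2)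
    have hev : c =ᶠ[𝓝 t] dn n₀ :=
      Filter.eventuallyEq_of_mem (Ioo_mem_nhds hmem.1 hmem.2) heqnbhd
    have hder2 : HasDerivAt c (F t (dn n₀ t)) t := hder.congr_of_eventuallyEq hev
    rw [← heqnbhd t hmem] at hder2
    have hFeq : F t (c t) =
        -(c t * P (Ring.inverse (c t) * (Ring.inverse (g t) * deriv g t) * c t)) := rfl
    rw [← hFeq]
    exact hder2
end

section
/- Let m be a finite-dimensional real vector space with skew bilinear [·,·]_m and a second bilinear map (y,w) ↦ [y,[w,y]_h]_m from m × m to m. Let η : m \ {0} → m be smooth positively 2-homogeneous, N(y,v) = (1/2)Dη(y,v) − (1/2)[y,v]_m, and define R_y(w) = [y,[w,y]_h]_m + DN(η(y), y, w) − N(y, N(y,w)) + N(y, [y,w]_m) − [y, N(y,w)]_m, where DN(η(y),y,w) = d/ds|_{s=0} N(y + sη(y), w). Suppose y(t) solves y'(t) = −η(y(t)) and w(t) solves w'(t) + N(y(t),w(t)) + [y(t),w(t)]_m = 0. Set N(t) = N(y(t),w(t)) and R(t) = R_{y(t)}(w(t)). Then, with the generalized bracket [η, N(t)] := −N'(t)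 − Dη(y(t), N(t)), one has R(t) = [y(t),[w(t),y(t)]_h]_m + [η, N(t)]. -/
/-- second identity of Theorem F: with
`R_y(w) = B(y,w) + DN(η(y),y,w) - N(y,N(y,w)) + N(y,[y,w]_m) - [y,N(y,w)]_m`
(where `B(y,w)` is the bilinear term `[y,[w,y]_h]_m`), along an integral curve `y(t)` of
`-η` and a linearly parallel field `w(t)`, setting `N(t) = N(y(t),w(t))` and
`R(t) = R_{y(t)}(w(t))`, and with the generalized bracket
`[η, N(t)] = -N'(t) - Dη(y(t), N(t))`, one has
`R(t) = [y(t),[w(t),y(t)]_h]_m + [η, N(t)]`. -/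
theorem riemann_curvature_along_geodesic
    {m : Type*} [NormedAddCommGroup m] [NormedSpace ℝ m] [FiniteDimensional ℝ m]
    (b : m →ₗ[ℝ] m →ₗ[ℝ] m) (hskew : ∀ u v : m, b u v = -b v u)
    (B : m →ₗ[ℝ] m →ₗ[ℝ] m)
    (η : m → m)
    (hηsmooth : ContDiffOn ℝ (⊤ : ℕ∞) η {0}ᶜ)
    (hηhom : ∀ c : ℝ, 0 < c → ∀ y : m, y ≠ 0 → η (c • y) = c ^ 2 • η y)
    (Dη : m → m → m)
    (hDη : ∀ y v : m, Dη y v = deriv (fun t : ℝ => η (y + t • v)) 0)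
    (N : m → m → m)
    (hN : ∀ y v : m, N y v = (1 / 2 : ℝ) • Dη y v - (1 / 2 : ℝ) • b y v)
    (DN : m → m → m → m)
    (hDN : ∀ u y w : m, DN u y w = deriv (fun s : ℝ => N (y + s • u) w) 0)
    (R : m → m → m)
    (hR : ∀ y w : m, R y w =
      B y w + DN (η y) y w - N y (N y w) + N y (b y w) - b y (N y w))
    (I : Set ℝ) (y w : ℝ → m)
    (hy : ∀ t ∈ I, y t ≠ 0 ∧ HasDerivAt y (-η (y t)) t)
    (hw : ∀ t ∈ I, HasDerivAt w (-N (y t) (w t) - b (y t) (w t)) t) :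
    ∀ t ∈ I, R (y t) (w t) =
      B (y t) (w t) +
        (-(deriv (fun s => N (y s) (w s)) t) - Dη (y t) (N (y t) (w t))) := by
  classical
  -- continuous version of b
  let e : (m →ₗ[ℝ] m) ≃ₗ[ℝ] (m →L[ℝ] m) := LinearMap.toContinuousLinearMap
  set bc : m →L[ℝ] m →L[ℝ] m :=
    LinearMap.toContinuousLinearMap (e.toLinearMap.comp b) with hbcdef
  have hbc : ∀ x v : m, bc x v = b x v := by
    intro x v; simp [hbcdef, e, LinearMap.coe_toContinuousLinearMap]
  set F : m → m →L[ℝ] m := fderiv ℝ η with hFdef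
  have hopen : IsOpen ({0}ᶜ : Set m) := isOpen_compl_singleton
  -- η is differentiable away from 0
  have hF : ∀ x : m, x ≠ 0 → HasFDerivAt η (F x) x := by
    intro x hx
    exact ((hηsmooth.contDiffAt (hopen.mem_nhds hx)).differentiableAt (by simp)).hasFDerivAt
  -- Dη via fderiv
  have hDηF : ∀ x : m, x ≠ 0 → ∀ v : m, Dη x v = F x v := by
    intro x hx v
    rw [hDη]
    have hc : HasDerivAt (fun s : ℝ => x + s • v) v 0 := by
      simpa using ((hasDerivAt_id (0 : ℝ)).smul_const v).const_add x
    have := (show HasFDerivAt η (F x) (x + (0:ℝ) • v) by simpa using hF x hx).comp_hasDerivAt 0 hc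
    simpa [Function.comp_def] using this.deriv
  have hNF : ∀ x : m, x ≠ 0 → ∀ v : m,
      N x v = (1 / 2 : ℝ) • F x v - (1 / 2 : ℝ) • bc x v := by
    intro x hx v
    rw [hN, hDηF x hx, hbc]
  -- F is differentiable away from 0
  have hFsm : ContDiffOn ℝ (⊤ : ℕ∞) F {0}ᶜ :=
    hηsmooth.fderiv_of_isOpen hopen (by simp)
  intro t ht
  obtain ⟨hy0, hy'⟩ := hy t ht
  have hw' := hw t ht
  set y0 := y t
  set w0 := w t
  set F' : m →L[ℝ] m →L[ℝ] m := fderiv ℝ F y0 with hF'def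
  have hF' : HasFDerivAt F F' y0 :=
    ((hFsm.contDiffAt (hopen.mem_nhds hy0)).differentiableAt (by simp)).hasFDerivAt
  -- Step D : compute DN (η y0) y0 w0
  have hDNval : DN (η y0) y0 w0
      = (1 / 2 : ℝ) • F' (η y0) w0 - (1 / 2 : ℝ) • bc (η y0) w0 := by
    rw [hDN]
    have hc : HasDerivAt (fun s : ℝ => y0 + s • η y0) (η y0) 0 := by
      simpa using ((hasDerivAt_id (0 : ℝ)).smul_const (η y0)).const_add y0
    have hcont : ContinuousAt (fun s : ℝ => y0 + s • η y0) 0 := hc.continuousAt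
    have hne : ∀ᶠ s in nhds (0 : ℝ), y0 + s • η y0 ≠ 0 := by
      have := hcont.eventually_ne (by simpa using hy0)
      simpa using this
    have heq : (fun s : ℝ => N (y0 + s • η y0) w0) =ᶠ[nhds (0 : ℝ)]
        fun s : ℝ => (1 / 2 : ℝ) • F (y0 + s • η y0) w0
          - (1 / 2 : ℝ) • bc (y0 + s • η y0) w0 := by
      filter_upwards [hne] with s hs
      exact hNF _ hs w0
    rw [heq.deriv_eq]
    have h1 : HasDerivAt (fun s : ℝ => F (y0 + s • η y0)) (F' (η y0)) 0 := by
      have := (show HasFDerivAt F F' (y0 + (0:ℝ) • η y0) by simpa using hF').comp_hasDerivAt 0 hc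
      simpa [Function.comp_def] using this
    have h2 : HasDerivAt (fun s : ℝ => F (y0 + s • η y0) w0) (F' (η y0) w0) 0 := by
      simpa using h1.clm_apply (hasDerivAt_const (0 : ℝ) w0)
    have h3 : HasDerivAt (fun s : ℝ => bc (y0 + s • η y0)) (bc (η y0)) 0 := by
      have := ((hasDerivAt_id (0:ℝ)).smul_const (bc (η y0))).const_add (bc y0)
      simpa [map_add, map_smul] using this
    have h4 : HasDerivAt (fun s : ℝ => bc (y0 + s • η y0) w0) (bc (η y0) w0) 0 := by
      simpa using h3.clm_apply (hasDerivAt_const (0 : ℝ) w0)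
    exact ((h2.const_smul ((1 : ℝ) / 2)).sub (h4.const_smul ((1 : ℝ) / 2))).deriv
  -- Step E : compute the derivative of N(y s, w s) at t
  set w' : m := -N y0 w0 - b y0 w0 with hw'def
  have hderivval : deriv (fun s => N (y s) (w s)) t
      = (1 / 2 : ℝ) • (F' (-η y0) w0 + F y0 w')
        - (1 / 2 : ℝ) • (bc (-η y0) w0 + bc y0 w') := by
    have hne : ∀ᶠ s in nhds t, y s ≠ 0 := hy'.continuousAt.eventually_ne hy0
    have heq : (fun s => N (y s) (w s)) =ᶠ[nhds t]
        fun s => (1 / 2 : ℝ) • F (y s) (w s) - (1 / 2 : ℝ) • bc (y s) (w s) := by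
      filter_upwards [hne] with s hs
      exact hNF _ hs (w s)
    rw [heq.deriv_eq]
    have h1 : HasDerivAt (fun s => F (y s)) (F' (-η y0)) t :=
      hF'.comp_hasDerivAt t hy'
    have h2 : HasDerivAt (fun s => F (y s) (w s)) (F' (-η y0) w0 + F y0 w') t :=
      h1.clm_apply hw'
    have h3 : HasDerivAt (fun s => bc (y s)) (bc (-η y0)) t :=
      bc.hasFDerivAt.comp_hasDerivAt t hy'
    have h4 : HasDerivAt (fun s => bc (y s) (w s)) (bc (-η y0) w0 + bc y0 w') t :=
      h3.clm_apply hw'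
    exact ((h2.const_smul ((1 : ℝ) / 2)).sub (h4.const_smul ((1 : ℝ) / 2))).deriv
  -- assemble
  rw [hR, hderivval, hDNval, hDηF y0 hy0]
  simp only [hw'def, hNF y0 hy0, ← hbc, map_neg, map_sub, map_add, map_smul,
    ContinuousLinearMap.neg_apply, ContinuousLinearMap.sub_apply,
    ContinuousLinearMap.add_apply, ContinuousLinearMap.smul_apply,
    smul_sub, smul_add, smul_neg]
  module
end

section
/- Let π : M̄ → M be a smooth submersion presented locally as π(x,z) = x, and let L ⊆ TM̄ be a distribution given locally as the graph w = l(x,z,y) with each l^β linear in y. Let Ḡ and G be spray structures on M̄ and M such that (π, L) is a submersion between them. Then the spray coefficients satisfy Ḡ^j(x,z,y,l(x,z,y)) = G^j(x,y) for all (x,z) and all y ≠ 0, and differentiating in y^i gives N̄^j_i(x,z,y,l(x,z,y)) + (∂l^α/∂y^i)(x,z) · N̄^j_α(x,z,y,l(x,z,y)) = N^j_i(x,y). -/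
open Set

/-!
Through every point `(x, z, y, l(x,z,y))` of `L \ 0` runs a horizontal geodesic of `Ḡ`; at
`t = 0` its `x`-component satisfies both `ẍ = -2 Ḡ^x(x, z, y, l(x,z,y))` and, being the
projection of a horizontal geodesic, `ẍ = -2 G(x, y)`. Hence `Ḡ^x(x, z, y, l(x,z,y)) = G(x, y)`
on the open set `y ≠ 0`, and the identity for the nonlinear connections is the chain rule
applied to `y ↦ Ḡ^x(x, z, y, l(x,z,y))`.
-/

section ChainRule

variable {𝕜 E F G : Type*} [NontriviallyNormedField 𝕜] [NormedAddCommGroup E] [NormedSpace 𝕜 E]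
  [NormedAddCommGroup F] [NormedSpace 𝕜 F] [NormedAddCommGroup G] [NormedSpace 𝕜 G]

theorem fderiv_apply_comp_of_differentiableAt_uncurry {f : E → F → G} {g : E → F} {y : E}
    (hf : DifferentiableAt 𝕜 (fun p : E × F => f p.1 p.2) (y, g y))
    (hg : DifferentiableAt 𝕜 g y) (v : E) :
    fderiv 𝕜 (fun y' => f y' (g y')) y v
      = fderiv 𝕜 (fun y' => f y' (g y)) y v + fderiv 𝕜 (f y) (g y) (fderiv 𝕜 g y v) := by
  set D := fderiv 𝕜 (fun p : E × F => f p.1 p.2) (y, g y)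
  have hD : HasFDerivAt (fun p : E × F => f p.1 p.2) D (y, g y) := hf.hasFDerivAt
  have h_total : HasFDerivAt (fun y' => f y' (g y'))
      (D.comp ((ContinuousLinearMap.id 𝕜 E).prod (fderiv 𝕜 g y))) y :=
    (hD.comp y ((hasFDerivAt_id y).prodMk hg.hasFDerivAt) :)
  have h_first : HasFDerivAt (fun y' => f y' (g y)) (D.comp (.inl 𝕜 E F)) y :=
    (hD.comp y (hasFDerivAt_prodMk_left (𝕜 := 𝕜) y (g y)) :)
  have h_second : HasFDerivAt (f y) (D.comp (.inr 𝕜 E F)) (g y) :=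
    (hD.comp (g y) (hasFDerivAt_prodMk_right (𝕜 := 𝕜) y (g y)) :)
  rw [h_total.fderiv, h_first.fderiv, h_second.fderiv]
  simp only [ContinuousLinearMap.comp_apply, ContinuousLinearMap.prod_apply,
    ContinuousLinearMap.id_apply, ContinuousLinearMap.inl_apply, ContinuousLinearMap.inr_apply,
    ← map_add, Prod.mk_add_mk, add_zero, zero_add]

end ChainRule

section HorizontalGeodesic

variable {E F : Type*} [NormedAddCommGroup E] [NormedSpace ℝ E] [NormedAddCommGroup F]
  [NormedSpace ℝ F]

def IsHorizontalGeodesicOn (Gbx : E → F → E → F → E) (Gbz : E → F → E → F → F)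
    (l : E → F → (E →ₗ[ℝ] F)) (xc : ℝ → E) (zc : ℝ → F) (ε : ℝ) : Prop :=
  ∀ t ∈ Ioo (-ε) ε,
    deriv xc t ≠ 0 ∧
    deriv zc t = l (xc t) (zc t) (deriv xc t) ∧
    deriv (deriv xc) t = (-2 : ℝ) • Gbx (xc t) (zc t) (deriv xc t) (deriv zc t) ∧
    deriv (deriv zc) t = (-2 : ℝ) • Gbz (xc t) (zc t) (deriv xc t) (deriv zc t)

theorem IsHorizontalGeodesicOn.spray_eq_at_zero {Gc : E → E → E} {Gbx : E → F → E → F → E}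
    {Gbz : E → F → E → F → F} {l : E → F → (E →ₗ[ℝ] F)} {xc : ℝ → E} {zc : ℝ → F} {ε : ℝ}
    (hε : 0 < ε) (hgeo : IsHorizontalGeodesicOn Gbx Gbz l xc zc ε)
    (hproj : deriv (deriv xc) 0 = (-2 : ℝ) • Gc (xc 0) (deriv xc 0)) :
    Gbx (xc 0) (zc 0) (deriv xc 0) (l (xc 0) (zc 0) (deriv xc 0)) = Gc (xc 0) (deriv xc 0) := by
  obtain ⟨-, h_horizontal, h_geodesic, -⟩ := hgeo 0 ⟨neg_lt_zero.mpr hε, hε⟩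
  rw [← h_horizontal]
  exact smul_right_injective E (by norm_num : (-2 : ℝ) ≠ 0) (h_geodesic.symm.trans hproj)

theorem spray_eq_on_distribution {Gc : E → E → E} {Gbx : E → F → E → F → E}
    {Gbz : E → F → E → F → F} {l : E → F → (E →ₗ[ℝ] F)}
    (hexist : ∀ x₀ z₀ y₀, y₀ ≠ 0 → ∃ ε > (0 : ℝ), ∃ (xc : ℝ → E) (zc : ℝ → F),
      xc 0 = x₀ ∧ zc 0 = z₀ ∧ deriv xc 0 = y₀ ∧ IsHorizontalGeodesicOn Gbx Gbz l xc zc ε)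
    (hproj : ∀ (xc : ℝ → E) (zc : ℝ → F) (ε : ℝ), 0 < ε →
      IsHorizontalGeodesicOn Gbx Gbz l xc zc ε →
      ∀ t ∈ Ioo (-ε) ε, deriv (deriv xc) t = (-2 : ℝ) • Gc (xc t) (deriv xc t))
    {x : E} {z : F} {y : E} (hy : y ≠ 0) :
    Gbx x z y (l x z y) = Gc x y := by
  obtain ⟨ε, hε, xc, zc, rfl, rfl, rfl, hgeo⟩ := hexist x z y hy
  exact hgeo.spray_eq_at_zero hε (hproj xc zc ε hε hgeo 0 ⟨neg_lt_zero.mpr hε, hε⟩)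

end HorizontalGeodesic

theorem spray_submersion_coefficients_general
    {n k : ℕ}
    (Gc : (Fin n → ℝ) → (Fin n → ℝ) → (Fin n → ℝ))
    (Gbx : (Fin n → ℝ) → (Fin k → ℝ) → (Fin n → ℝ) → (Fin k → ℝ) → (Fin n → ℝ))
    (Gbz : (Fin n → ℝ) → (Fin k → ℝ) → (Fin n → ℝ) → (Fin k → ℝ) → (Fin k → ℝ))
    (l : (Fin n → ℝ) → (Fin k → ℝ) → ((Fin n → ℝ) →ₗ[ℝ] (Fin k → ℝ)))
    (hGbsm : ∀ x z y w, y ≠ 0 → DifferentiableAt ℝ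
      (fun p : (Fin n → ℝ) × (Fin k → ℝ) => Gbx x z p.1 p.2) (y, w))
    -- (a) Ḡ is tangent to L \ 0: through every point of L \ 0 there is a horizontal
    -- geodesic of Ḡ
    (hexist : ∀ x₀ z₀ y₀, y₀ ≠ (0 : Fin n → ℝ) → ∃ ε > (0 : ℝ),
      ∃ (xc : ℝ → Fin n → ℝ) (zc : ℝ → Fin k → ℝ),
        xc 0 = x₀ ∧ zc 0 = z₀ ∧ deriv xc 0 = y₀ ∧
        ∀ t ∈ Ioo (-ε) ε,
          deriv xc t ≠ 0 ∧
          deriv zc t = l (xc t) (zc t) (deriv xc t) ∧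
          deriv (deriv xc) t = (-2 : ℝ) • Gbx (xc t) (zc t) (deriv xc t) (deriv zc t) ∧
          deriv (deriv zc) t = (-2 : ℝ) • Gbz (xc t) (zc t) (deriv xc t) (deriv zc t))
    -- (b) horizontal geodesics of Ḡ project to geodesics of G
    (hproj : ∀ (xc : ℝ → Fin n → ℝ) (zc : ℝ → Fin k → ℝ) (ε : ℝ), 0 < ε →
      (∀ t ∈ Ioo (-ε) ε,
          deriv xc t ≠ 0 ∧
          deriv zc t = l (xc t) (zc t) (deriv xc t) ∧
          deriv (deriv xc) t = (-2 : ℝ) • Gbx (xc t) (zc t) (deriv xc t) (deriv zc t) ∧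
          deriv (deriv zc) t = (-2 : ℝ) • Gbz (xc t) (zc t) (deriv xc t) (deriv zc t)) →
      ∀ t ∈ Ioo (-ε) ε,
        deriv (deriv xc) t = (-2 : ℝ) • Gc (xc t) (deriv xc t)) :
    -- conclusions (1) and (2) of Lemma 3.1
    (∀ x z y, y ≠ (0 : Fin n → ℝ) → Gbx x z y (l x z y) = Gc x y) ∧
    (∀ x z y, y ≠ (0 : Fin n → ℝ) → ∀ v : Fin n → ℝ,
      fderiv ℝ (fun y' => Gbx x z y' (l x z y)) y v
        + fderiv ℝ (fun w' => Gbx x z y w') (l x z y) (l x z v)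
      = fderiv ℝ (fun y' => Gc x y') y v) := by
  have h_eq : ∀ x z y, y ≠ (0 : Fin n → ℝ) → Gbx x z y (l x z y) = Gc x y :=
    fun x z y hy => spray_eq_on_distribution hexist hproj hy
  refine ⟨h_eq, fun x z y hy v => ?_⟩
  let L := LinearMap.toContinuousLinearMap (l x z)
  have h_chain := fderiv_apply_comp_of_differentiableAt_uncurry (g := L)
    (hGbsm x z y (l x z y) hy) L.differentiableAt v
  have h_local : (fun y' => Gbx x z y' (L y')) =ᶠ[nhds y] fun y' => Gc x y' := by
    filter_upwards [isOpen_ne.mem_nhds hy] with y' hy'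
    exact h_eq x z y' hy'
  rw [L.fderiv, h_local.fderiv_eq] at h_chain
  exact h_chain.symm

/-- Lemma 3.1: for a submersion `(π, L)` between spray structures, presented
in standard local coordinates as `π(x,z) = x`, with `L` the graph of `w = l(x,z,y)`
(`l` linear in `y`), sprays `Ḡ = (Ḡ^j, Ḡ^α)` and `G = (G^j)` such that (a) horizontal
geodesics of `Ḡ` exist with arbitrary initial data in `L \ 0`, and (b) every horizontal
geodesic of `Ḡ` projects to a geodesic of `G`, the spray coefficients satisfy
`Ḡ^j(x,z,y,l(x,z,y)) = G^j(x,y)` for `y ≠ 0`, and differentiating in `y` gives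
`N̄^j_i + (∂l^α/∂y^i)·N̄^j_α = N^j_i` along `L`. -/
theorem spray_submersion_coefficients
    {n k : ℕ}
    (Gc : (Fin n → ℝ) → (Fin n → ℝ) → (Fin n → ℝ))
    (Gbx : (Fin n → ℝ) → (Fin k → ℝ) → (Fin n → ℝ) → (Fin k → ℝ) → (Fin n → ℝ))
    (Gbz : (Fin n → ℝ) → (Fin k → ℝ) → (Fin n → ℝ) → (Fin k → ℝ) → (Fin k → ℝ))
    (l : (Fin n → ℝ) → (Fin k → ℝ) → ((Fin n → ℝ) →ₗ[ℝ] (Fin k → ℝ)))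
    -- positive 2-homogeneity of the spray coefficients
    (hGhom : ∀ x y (c : ℝ), 0 < c → Gc x (c • y) = c ^ 2 • Gc x y)
    (hGbhom : ∀ x z y w (c : ℝ), 0 < c →
      Gbx x z (c • y) (c • w) = c ^ 2 • Gbx x z y w ∧
      Gbz x z (c • y) (c • w) = c ^ 2 • Gbz x z y w)
    -- smoothness of the spray coefficients in the fiber variables, away from 0
    (hGsm : ∀ x y, y ≠ 0 → DifferentiableAt ℝ (fun y' => Gc x y') y)
    (hGbsm : ∀ x z y w, y ≠ 0 → DifferentiableAt ℝ
      (fun p : (Fin n → ℝ) × (Fin k → ℝ) => Gbx x z p.1 p.2) (y, w))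
    -- (a) Ḡ is tangent to L \ 0: through every point of L \ 0 there is a horizontal
    -- geodesic of Ḡ
    (hexist : ∀ x₀ z₀ y₀, y₀ ≠ (0 : Fin n → ℝ) → ∃ ε > (0 : ℝ),
      ∃ (xc : ℝ → Fin n → ℝ) (zc : ℝ → Fin k → ℝ),
        xc 0 = x₀ ∧ zc 0 = z₀ ∧ deriv xc 0 = y₀ ∧
        ∀ t ∈ Ioo (-ε) ε,
          deriv xc t ≠ 0 ∧
          deriv zc t = l (xc t) (zc t) (deriv xc t) ∧
          deriv (deriv xc) t = (-2 : ℝ) • Gbx (xc t) (zc t) (deriv xc t) (deriv zc t) ∧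
          deriv (deriv zc) t = (-2 : ℝ) • Gbz (xc t) (zc t) (deriv xc t) (deriv zc t))
    -- (b) horizontal geodesics of Ḡ project to geodesics of G
    (hproj : ∀ (xc : ℝ → Fin n → ℝ) (zc : ℝ → Fin k → ℝ) (ε : ℝ), 0 < ε →
      (∀ t ∈ Ioo (-ε) ε,
          deriv xc t ≠ 0 ∧
          deriv zc t = l (xc t) (zc t) (deriv xc t) ∧
          deriv (deriv xc) t = (-2 : ℝ) • Gbx (xc t) (zc t) (deriv xc t) (deriv zc t) ∧
          deriv (deriv zc) t = (-2 : ℝ) • Gbz (xc t) (zc t) (deriv xc t) (deriv zc t)) →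
      ∀ t ∈ Ioo (-ε) ε,
        deriv (deriv xc) t = (-2 : ℝ) • Gc (xc t) (deriv xc t)) :
    -- conclusions (1) and (2) of Lemma 3.1
    (∀ x z y, y ≠ (0 : Fin n → ℝ) → Gbx x z y (l x z y) = Gc x y) ∧
    (∀ x z y, y ≠ (0 : Fin n → ℝ) → ∀ v : Fin n → ℝ,
      fderiv ℝ (fun y' => Gbx x z y' (l x z y)) y v
        + fderiv ℝ (fun w' => Gbx x z y w') (l x z y) (l x z v)
      = fderiv ℝ (fun y' => Gc x y') y v) :=
  spray_submersion_coefficients_general Gc Gbx Gbz l hGbsm hexist hproj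
end

section
/- Let m be a finite-dimensional real vector space, F a Minkowski norm on m with fundamental tensor g_y and Cartan tensor C_y, and suppose {y(t)} ⊂ m \ {0} and {w(t)} ⊂ m are smooth curves with y'(t) = −η(y(t)) and w'(t) = −N(y(t),w(t)) − [y(t),w(t)]_m, where η is smooth positively 2-homogeneous and N(y,v) = (1/2)Dη(y,v) − (1/2)[y,v]_m. Then d/dt|_{t=0} C_{y(t)}(w(t), w(t), w(t)) = 3·C_{y(0)}(w(0), w(0), [w(0), y(0)]_m − N(y(0), w(0))) − C_{y(0)}(w(0), w(0), w(0), η(y(0))), where C_y(u,v,w,z) = d/ds|_{s=0} C_{y+sz}(u,v,w). -/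
set_option maxHeartbeats 2000000

open Filter Topology

lemma line_hasDerivAt {m : Type*} [NormedAddCommGroup m] [NormedSpace ℝ m]
    (p v : m) : HasDerivAt (fun t : ℝ => p + t • v) v 0 := by
  simpa using ((hasDerivAt_id (0:ℝ)).smul_const v).const_add p

lemma line_fderiv_comp {m E : Type*} [NormedAddCommGroup m] [NormedSpace ℝ m]
    [NormedAddCommGroup E] [NormedSpace ℝ E]
    {f : m → E} {f' : m →L[ℝ] E} {p : m} (hf : HasFDerivAt f f' p) (v : m) :
    HasDerivAt (fun t : ℝ => f (p + t • v)) (f' v) 0 := by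
  have h0 : HasFDerivAt f f' (p + (0:ℝ) • v) := by simpa using hf
  simpa [Function.comp_def] using h0.comp_hasDerivAt 0 (line_hasDerivAt p v)

theorem landsberg_chain_rule'
    {m : Type*} [NormedAddCommGroup m] [NormedSpace ℝ m] [FiniteDimensional ℝ m]
    (F : m → ℝ)
    (hFsmooth : ContDiffOn ℝ (⊤ : ℕ∞) F {0}ᶜ)
    (C : m → m → m → m → ℝ)
    (hC : ∀ y u v w : m, C y u v w = (1 / 4 : ℝ) *
      deriv (fun r : ℝ =>
        deriv (fun s : ℝ =>
          deriv (fun t : ℝ => (F (y + r • u + s • v + t • w)) ^ 2) 0) 0) 0)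
    (C4 : m → m → m → m → m → ℝ)
    (hC4 : ∀ y u v w z : m, C4 y u v w z = deriv (fun s : ℝ => C (y + s • z) u v w) 0)
    (b : m →ₗ[ℝ] m →ₗ[ℝ] m) (hskew : ∀ u v : m, b u v = -b v u)
    (η : m → m)
    (N : m → m → m)
    (y w : ℝ → m)
    (hy : ∀ t : ℝ, y t ≠ 0 ∧ HasDerivAt y (-η (y t)) t)
    (hw : ∀ t : ℝ, HasDerivAt w (-N (y t) (w t) - b (y t) (w t)) t) :
    deriv (fun t : ℝ => C (y t) (w t) (w t) (w t)) 0
      = 3 * C (y 0) (w 0) (w 0) (b (w 0) (y 0) - N (y 0) (w 0))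
        - C4 (y 0) (w 0) (w 0) (w 0) (η (y 0)) := by
  letI : NormedAddCommGroup (m →L[ℝ] m →L[ℝ] ℝ) := inferInstance
  letI : NormedSpace ℝ (m →L[ℝ] m →L[ℝ] ℝ) := inferInstance
  letI : NormedAddCommGroup (m →L[ℝ] m →L[ℝ] m →L[ℝ] ℝ) := inferInstance
  letI : NormedSpace ℝ (m →L[ℝ] m →L[ℝ] m →L[ℝ] ℝ) := inferInstance
  set U : Set m := {0}ᶜ with hUdef
  have hU : IsOpen U := isOpen_compl_singleton
  set G : m → ℝ := fun p => (F p) ^ 2 with hGdef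
  have hG : ContDiffOn ℝ (⊤ : ℕ∞) G U := hFsmooth.pow 2
  set D1 := fderiv ℝ G with hD1def
  set D2 := fderiv ℝ D1 with hD2def
  set D3 := fderiv ℝ D2 with hD3def
  set D4 := fderiv ℝ D3 with hD4def
  have hD1 : ContDiffOn ℝ (⊤ : ℕ∞) D1 U := hG.fderiv_of_isOpen hU (by simp)
  have hD2 : ContDiffOn ℝ (⊤ : ℕ∞) D2 U := hD1.fderiv_of_isOpen hU (by simp)
  have hD3 : ContDiffOn ℝ (⊤ : ℕ∞) D3 U := hD2.fderiv_of_isOpen hU (by simp)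
  have hGd : ∀ p ∈ U, HasFDerivAt G (D1 p) p := fun p hp =>
    ((hG.contDiffAt (hU.mem_nhds hp)).differentiableAt (by simp)).hasFDerivAt
  have hD1d : ∀ p ∈ U, HasFDerivAt D1 (D2 p) p := fun p hp =>
    ((hD1.contDiffAt (hU.mem_nhds hp)).differentiableAt (by simp)).hasFDerivAt
  have hD2d : ∀ p ∈ U, HasFDerivAt D2 (D3 p) p := fun p hp =>
    ((hD2.contDiffAt (hU.mem_nhds hp)).differentiableAt (by simp)).hasFDerivAt
  have hD3d : ∀ p ∈ U, HasFDerivAt D3 (D4 p) p := fun p hp =>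
    ((hD3.contDiffAt (hU.mem_nhds hp)).differentiableAt (by simp)).hasFDerivAt
  have hmem : ∀ p ∈ U, ∀ v : m, ∀ᶠ s : ℝ in 𝓝 0, p + s • v ∈ U := by
    intro p hp v
    have hc : ContinuousAt (fun s : ℝ => p + s • v) 0 := by fun_prop
    have : U ∈ 𝓝 (p + (0:ℝ) • v) := by simpa using hU.mem_nhds hp
    exact hc.eventually_mem this
  -- first level
  have claimA : ∀ p ∈ U, ∀ v : m, deriv (fun t : ℝ => G (p + t • v)) 0 = D1 p v :=
    fun p hp v => (line_fderiv_comp (hGd p hp) v).deriv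
  -- evaluation derivatives
  have ev1 : ∀ p ∈ U, ∀ u v : m,
      HasDerivAt (fun s : ℝ => D1 (p + s • u) v) (D2 p u v) 0 := by
    intro p hp u v
    simpa using (line_fderiv_comp (hD1d p hp) u).clm_apply (hasDerivAt_const 0 v)
  have ev2 : ∀ p ∈ U, ∀ u v w' : m,
      HasDerivAt (fun s : ℝ => D2 (p + s • u) v w') (D3 p u v w') 0 := by
    intro p hp u v w'
    simpa using ((line_fderiv_comp (hD2d p hp) u).clm_apply
      (hasDerivAt_const 0 v)).clm_apply (hasDerivAt_const 0 w')
  have ev3 : ∀ p ∈ U, ∀ z u v w' : m,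
      HasDerivAt (fun s : ℝ => D3 (p + s • z) u v w') (D4 p z u v w') 0 := by
    intro p hp z u v w'
    simpa using (((line_fderiv_comp (hD3d p hp) z).clm_apply
      (hasDerivAt_const 0 u)).clm_apply (hasDerivAt_const 0 v)).clm_apply
      (hasDerivAt_const 0 w')
  -- second level
  have claimB : ∀ p ∈ U, ∀ v w' : m,
      deriv (fun s : ℝ => deriv (fun t : ℝ => G (p + s • v + t • w')) 0) 0
        = D2 p v w' := by
    intro p hp v w'
    have he : (fun s : ℝ => deriv (fun t : ℝ => G (p + s • v + t • w')) 0)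
        =ᶠ[𝓝 (0:ℝ)] fun s => D1 (p + s • v) w' := by
      filter_upwards [hmem p hp v] with s hs
      exact claimA _ hs w'
    rw [he.deriv_eq]
    exact (ev1 p hp v w').deriv
  -- third level
  have claimC : ∀ p ∈ U, ∀ u v w' : m, C p u v w' = (1/4 : ℝ) * D3 p u v w' := by
    intro p hp u v w'
    rw [hC]
    congr 1
    have he : (fun r : ℝ => deriv (fun s : ℝ =>
        deriv (fun t : ℝ => G (p + r • u + s • v + t • w')) 0) 0)
        =ᶠ[𝓝 (0:ℝ)] fun r => D2 (p + r • u) v w' := by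
      filter_upwards [hmem p hp u] with r hr
      exact claimB _ hr v w'
    rw [he.deriv_eq]
    exact (ev2 p hp u v w').deriv
  -- fourth level
  have claimC4 : ∀ p ∈ U, ∀ u v w' z : m,
      C4 p u v w' z = (1/4 : ℝ) * D4 p z u v w' := by
    intro p hp u v w' z
    rw [hC4]
    have he : (fun s : ℝ => C (p + s • z) u v w')
        =ᶠ[𝓝 (0:ℝ)] fun s => (1/4 : ℝ) * D3 (p + s • z) u v w' := by
      filter_upwards [hmem p hp z] with s hs
      exact claimC _ hs u v w'
    rw [he.deriv_eq]
    exact (HasDerivAt.const_mul (1/4 : ℝ) (ev3 p hp z u v w')).deriv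
  -- symmetry of D2
  have symmD2 : ∀ p ∈ U, ∀ v w' : m, D2 p v w' = D2 p w' v := by
    intro p hp v w'
    have hev : ∀ᶠ q in 𝓝 p, HasFDerivAt G (D1 q) q := by
      filter_upwards [hU.mem_nhds hp] with q hq; exact hGd q hq
    exact second_derivative_symmetric_of_eventually hev (hD1d p hp) v w'
  -- symmetry of D3 in first two slots
  have symm12 : ∀ p ∈ U, ∀ u v : m, D3 p u v = D3 p v u := by
    intro p hp u v
    have hev : ∀ᶠ q in 𝓝 p, HasFDerivAt D1 (D2 q) q := by
      filter_upwards [hU.mem_nhds hp] with q hq; exact hD1d q hq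
    exact second_derivative_symmetric_of_eventually hev (hD2d p hp) u v
  -- symmetry of D3 in last two slots
  have symm23 : ∀ p ∈ U, ∀ u v w' : m, D3 p u v w' = D3 p u w' v := by
    intro p hp u v w'
    rw [← (ev2 p hp u v w').deriv, ← (ev2 p hp u w' v).deriv]
    apply Filter.EventuallyEq.deriv_eq
    filter_upwards [hmem p hp u] with s hs
    exact symmD2 _ hs v w'
  -- membership
  have hmemU : ∀ t : ℝ, y t ∈ U := fun t => (hy t).1
  have hy0 : y 0 ∈ U := hmemU 0
  -- rewrite the function
  have hfun : (fun t : ℝ => C (y t) (w t) (w t) (w t))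
      = fun t => (1/4 : ℝ) * D3 (y t) (w t) (w t) (w t) :=
    funext fun t => claimC (y t) (hmemU t) _ _ _
  rw [hfun]
  -- chain rule
  set y0 := y 0
  set w0 := w 0
  set wd := -N (y 0) (w 0) - b (y 0) (w 0) with hwddef
  have hyd : HasDerivAt y (-η y0) 0 := (hy 0).2
  have hwd : HasDerivAt w wd 0 := hw 0
  have hA : HasDerivAt (fun t => D3 (y t)) (D4 y0 (-η y0)) 0 := by
    simpa [Function.comp_def] using (hD3d y0 hy0).comp_hasDerivAt 0 hyd
  have h3 := ((hA.clm_apply hwd).clm_apply hwd).clm_apply hwd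
  have h4 := HasDerivAt.const_mul (1/4 : ℝ) h3
  rw [h4.deriv]
  -- rewrite RHS
  have hX : b w0 y0 - N y0 w0 = wd := by
    rw [hskew, hwddef]; abel
  rw [claimC y0 hy0, claimC4 y0 hy0, hX]
  have e1 : D3 y0 wd w0 w0 = D3 y0 w0 w0 wd := by
    rw [symm12 y0 hy0 wd w0, symm23 y0 hy0 w0 wd w0]
  have e2 : D3 y0 w0 wd w0 = D3 y0 w0 w0 wd := symm23 y0 hy0 w0 wd w0
  have e3 : D4 y0 (-η y0) w0 w0 w0 = -(D4 y0 (η y0) w0 w0 w0) := by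
    rw [map_neg]; simp
  simp only [ContinuousLinearMap.add_apply]
  rw [e1, e2, e3]
  ring



/-- core computation of the homogeneous Landsberg curvature formula: for a
Minkowski norm `F` on `m` with Cartan tensors `C_y(u,v,w)` and `C_y(u,v,w,z)`, and smooth
curves with `y' = -η(y)`, `w' = -N(y,w) - [y,w]_m` (where `η` is positively 2-homogeneous
smooth and `N(y,v) = (1/2)Dη(y,v) - (1/2)[y,v]_m`),
`d/dt|₀ C_{y(t)}(w(t),w(t),w(t)) = 3·C_{y(0)}(w(0),w(0),[w(0),y(0)]_m - N(y(0),w(0)))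
  - C_{y(0)}(w(0),w(0),w(0),η(y(0)))`. -/
theorem landsberg_chain_rule
    {m : Type*} [NormedAddCommGroup m] [NormedSpace ℝ m] [FiniteDimensional ℝ m]
    (F : m → ℝ)
    (hFpos : ∀ y : m, y ≠ 0 → 0 < F y)
    (hFsmooth : ContDiffOn ℝ (⊤ : ℕ∞) F {0}ᶜ)
    (hFhom : ∀ c : ℝ, 0 ≤ c → ∀ y : m, F (c • y) = c * F y)
    (hFconv : ∀ y : m, y ≠ 0 → ∀ u : m, u ≠ 0 →
      0 < deriv (fun s : ℝ => deriv (fun t : ℝ => (F (y + s • u + t • u)) ^ 2) 0) 0)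
    (C : m → m → m → m → ℝ)
    (hC : ∀ y u v w : m, C y u v w = (1 / 4 : ℝ) *
      deriv (fun r : ℝ =>
        deriv (fun s : ℝ =>
          deriv (fun t : ℝ => (F (y + r • u + s • v + t • w)) ^ 2) 0) 0) 0)
    (C4 : m → m → m → m → m → ℝ)
    (hC4 : ∀ y u v w z : m, C4 y u v w z = deriv (fun s : ℝ => C (y + s • z) u v w) 0)
    (b : m →ₗ[ℝ] m →ₗ[ℝ] m) (hskew : ∀ u v : m, b u v = -b v u)
    (η : m → m)
    (hηsmooth : ContDiffOn ℝ (⊤ : ℕ∞) η {0}ᶜ)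
    (hηhom : ∀ c : ℝ, 0 < c → ∀ y : m, y ≠ 0 → η (c • y) = c ^ 2 • η y)
    (N : m → m → m)
    (hN : ∀ y v : m, N y v =
      (1 / 2 : ℝ) • deriv (fun t : ℝ => η (y + t • v)) 0 - (1 / 2 : ℝ) • b y v)
    (y w : ℝ → m)
    (hy : ∀ t : ℝ, y t ≠ 0 ∧ HasDerivAt y (-η (y t)) t)
    (hw : ∀ t : ℝ, HasDerivAt w (-N (y t) (w t) - b (y t) (w t)) t) :
    deriv (fun t : ℝ => C (y t) (w t) (w t) (w t)) 0
      = 3 * C (y 0) (w 0) (w 0) (b (w 0) (y 0) - N (y 0) (w 0))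
        - C4 (y 0) (w 0) (w 0) (w 0) (η (y 0)) := by
  exact landsberg_chain_rule' F hFsmooth C hC C4 hC4 b hskew η N y w hy hw
end
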